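/- (Uniform Gronwall lemma) Let 0 < T ≤ ∞ and let y and g be nonnegative continuous functions on [0,T] with y absolutely continuous, satisfying dy/dt ≤ c₁y² + c₂g + c₃ on (0,T), ∫₀^T y(t) dt ≤ c₄ and ∫₀^T g(t) dt ≤ c₅, where c₁,…,c₅ are nonnegative constants. Then for any r ∈ (0,T), y(t+r) ≤ (c₄ r^{−1} + c₂c₅ + c₃r) e^{c₁c₄} for all t ∈ [0, T−r]. Moreover, if T = ∞, then lim_{t→∞} y(t) = 0. -/
import Mathlib

open MeasureTheory Set Filter ENNReal

section Aux
open intervalIntegral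

/-- Core Gronwall step on an interval `[s,b]`. -/
lemma gronwall_core_aux (y g y' : ℝ → ℝ) (c1 c2 c3 : ℝ)
    (hc1 : 0 ≤ c1) (hc2 : 0 ≤ c2) (hc3 : 0 ≤ c3)
    (s b : ℝ) (hsb : s ≤ b)
    (hynn : ∀ u ∈ Icc s b, 0 ≤ y u) (hgnn : ∀ u ∈ Icc s b, 0 ≤ g u)
    (hycont : ContinuousOn y (Icc s b)) (hgcont : ContinuousOn g (Icc s b))
    (hderiv : ∀ u ∈ Ioo s b, HasDerivAt y (y' u) u)
    (hineq : ∀ u ∈ Ioo s b, y' u ≤ c1 * (y u) ^ 2 + c2 * g u + c3) :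
    y b ≤ (y s + ∫ u in s..b, (c2 * g u + c3)) * Real.exp (c1 * ∫ u in s..b, y u) := by
  have huIcc : uIcc s b = Icc s b := uIcc_of_le hsb
  set A : ℝ → ℝ := fun u => ∫ x in s..u, y x with hA_def
  set F : ℝ → ℝ := fun u => y u * Real.exp (-(c1 * A u)) with hF_def
  set G : ℝ → ℝ := fun u => (∫ x in s..u, (c2 * g x + c3)) - F u with hG_def
  have hbcont : ContinuousOn (fun u => c2 * g u + c3) (Icc s b) :=
    (continuousOn_const.mul hgcont).add continuousOn_const
  have hyii : IntervalIntegrable y MeasureTheory.volume s b := by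
    apply ContinuousOn.intervalIntegrable; rwa [huIcc]
  have hbii : IntervalIntegrable (fun u => c2 * g u + c3) MeasureTheory.volume s b := by
    apply ContinuousOn.intervalIntegrable; rwa [huIcc]
  have hAcont : ContinuousOn A (Icc s b) := by
    have := continuousOn_primitive_interval (μ := MeasureTheory.volume) (f := y) (a := s) (b := b)
      (by rw [huIcc]; exact hycont.integrableOn_compact isCompact_Icc)
    rwa [huIcc] at this
  have hAderiv : ∀ u ∈ Ioo s b, HasDerivAt A (y u) u := by
    intro u hu
    have h1 : IntervalIntegrable y MeasureTheory.volume s u := by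
      apply ContinuousOn.intervalIntegrable
      rw [uIcc_of_le hu.1.le]
      exact hycont.mono (Icc_subset_Icc le_rfl hu.2.le)
    have h2 := (hycont.mono Ioo_subset_Icc_self).stronglyMeasurableAtFilter (μ := MeasureTheory.volume) isOpen_Ioo u hu
    have h3 : ContinuousAt y u := hycont.continuousAt (Icc_mem_nhds hu.1 hu.2)
    exact intervalIntegral.integral_hasDerivAt_right h1 h2 h3
  have hAnn : ∀ u ∈ Icc s b, 0 ≤ A u := by
    intro u hu
    exact intervalIntegral.integral_nonneg hu.1 (fun x hx =>
      hynn x ⟨hx.1, hx.2.trans hu.2⟩)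
  have hGderiv : ∀ u ∈ Ioo s b, HasDerivAt G
      ((c2 * g u + c3) - (y' u * Real.exp (-(c1 * A u)) +
        y u * (Real.exp (-(c1 * A u)) * (-(c1 * y u))))) u := by
    intro u hu
    have h1 : IntervalIntegrable (fun x => c2 * g x + c3) MeasureTheory.volume s u := by
      apply ContinuousOn.intervalIntegrable
      rw [uIcc_of_le hu.1.le]
      exact hbcont.mono (Icc_subset_Icc le_rfl hu.2.le)
    have h2 := (hbcont.mono Ioo_subset_Icc_self).stronglyMeasurableAtFilter (μ := MeasureTheory.volume) isOpen_Ioo u hu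
    have h3 : ContinuousAt (fun x => c2 * g x + c3) u :=
      hbcont.continuousAt (Icc_mem_nhds hu.1 hu.2)
    have hPrim : HasDerivAt (fun v => ∫ x in s..v, (c2 * g x + c3)) (c2 * g u + c3) u :=
      intervalIntegral.integral_hasDerivAt_right h1 h2 h3
    have hExp : HasDerivAt (fun v => Real.exp (-(c1 * A v)))
        (Real.exp (-(c1 * A u)) * (-(c1 * y u))) u :=
      (((hAderiv u hu).const_mul c1).neg).exp
    exact hPrim.sub ((hderiv u hu).mul hExp)
  have hGderiv_nn : ∀ u ∈ Ioo s b, 0 ≤ (c2 * g u + c3) - (y' u * Real.exp (-(c1 * A u)) +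
        y u * (Real.exp (-(c1 * A u)) * (-(c1 * y u)))) := by
    intro u hu
    set e := Real.exp (-(c1 * A u)) with he_def
    have he0 : 0 < e := Real.exp_pos _
    have he1 : e ≤ 1 := by
      rw [he_def, ← Real.exp_zero]
      apply Real.exp_le_exp.2
      have := hAnn u (Ioo_subset_Icc_self hu)
      nlinarith
    have hq : y' u - c1 * (y u) ^ 2 ≤ c2 * g u + c3 := by
      have := hineq u hu; linarith
    have hd0 : 0 ≤ c2 * g u + c3 := by
      have := hgnn u (Ioo_subset_Icc_self hu); positivity
    have key : (y' u - c1 * (y u) ^ 2) * e ≤ c2 * g u + c3 := by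
      calc (y' u - c1 * (y u) ^ 2) * e ≤ (c2 * g u + c3) * e :=
            mul_le_mul_of_nonneg_right hq he0.le
        _ ≤ (c2 * g u + c3) * 1 := mul_le_mul_of_nonneg_left he1 hd0
        _ = c2 * g u + c3 := mul_one _
    nlinarith [key]
  have hGcont : ContinuousOn G (Icc s b) := by
    have h1 : ContinuousOn (fun u => ∫ x in s..u, (c2 * g x + c3)) (Icc s b) := by
      have := continuousOn_primitive_interval (μ := MeasureTheory.volume)
        (f := fun x => c2 * g x + c3) (a := s) (b := b)
        (by rw [huIcc]; exact hbcont.integrableOn_compact isCompact_Icc)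
      rwa [huIcc] at this
    have h2 : ContinuousOn F (Icc s b) :=
      hycont.mul (Real.continuous_exp.comp_continuousOn ((continuousOn_const.mul hAcont).neg))
    exact h1.sub h2
  have hmono : MonotoneOn G (Icc s b) := by
    apply monotoneOn_of_deriv_nonneg (convex_Icc s b) hGcont
    · intro u hu
      rw [interior_Icc] at hu
      exact (hGderiv u hu).differentiableAt.differentiableWithinAt
    · intro u hu
      rw [interior_Icc] at hu
      rw [(hGderiv u hu).deriv]
      exact hGderiv_nn u hu
  have hGsb : G s ≤ G b := hmono (left_mem_Icc.2 hsb) (right_mem_Icc.2 hsb) hsb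
  have hAs : A s = 0 := intervalIntegral.integral_same
  have hFb : F b ≤ y s + ∫ u in s..b, (c2 * g u + c3) := by
    have hGs : G s = -(y s) := by
      simp [hG_def, hF_def, hAs, intervalIntegral.integral_same]
    rw [hGs] at hGsb
    simp only [hG_def] at hGsb
    linarith
  have hfinal : y b = F b * Real.exp (c1 * A b) := by
    rw [hF_def]
    simp only
    rw [mul_assoc, ← Real.exp_add]
    simp
  rw [hfinal]
  have hexp : (0:ℝ) < Real.exp (c1 * A b) := Real.exp_pos _
  calc F b * Real.exp (c1 * A b) ≤ (y s + ∫ u in s..b, (c2 * g u + c3)) * Real.exp (c1 * A b) :=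
        mul_le_mul_of_nonneg_right hFb hexp.le
    _ = (y s + ∫ u in s..b, (c2 * g u + c3)) * Real.exp (c1 * ∫ u in s..b, y u) := rfl

end Aux

/-- Lemma 6.3, uniform Gronwall lemma: if `y, g ≥ 0` are continuous
on `[0,T]` (with `0 < T ≤ ∞`), `y` is differentiable with
`y' ≤ c₁ y² + c₂ g + c₃` on `(0,T)`, `∫₀^T y ≤ c₄` and `∫₀^T g ≤ c₅`, then
`y(t+r) ≤ (c₄ r⁻¹ + c₂ c₅ + c₃ r) e^{c₁ c₄}` for every `r ∈ (0,T)` and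
`t ∈ [0, T − r]`; moreover if `T = ∞` then `y(t) → 0` as `t → ∞`. -/
theorem uniform_gronwall
    (T : ℝ≥0∞) (hT : 0 < T)
    (y g y' : ℝ → ℝ) (c1 c2 c3 c4 c5 : ℝ)
    (hc1 : 0 ≤ c1) (hc2 : 0 ≤ c2) (hc3 : 0 ≤ c3) (hc4 : 0 ≤ c4) (hc5 : 0 ≤ c5)
    (hynn : ∀ t : ℝ, 0 ≤ t → ENNReal.ofReal t ≤ T → 0 ≤ y t)
    (hgnn : ∀ t : ℝ, 0 ≤ t → ENNReal.ofReal t ≤ T → 0 ≤ g t)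
    (hycont : ContinuousOn y {t : ℝ | 0 ≤ t ∧ ENNReal.ofReal t ≤ T})
    (hgcont : ContinuousOn g {t : ℝ | 0 ≤ t ∧ ENNReal.ofReal t ≤ T})
    (hyderiv : ∀ t : ℝ, 0 < t → ENNReal.ofReal t < T → HasDerivAt y (y' t) t)
    (hineq : ∀ t : ℝ, 0 < t → ENNReal.ofReal t < T →
        y' t ≤ c1 * (y t) ^ 2 + c2 * g t + c3)
    (hyint : IntegrableOn y {t : ℝ | 0 ≤ t ∧ ENNReal.ofReal t ≤ T})
    (hgint : IntegrableOn g {t : ℝ | 0 ≤ t ∧ ENNReal.ofReal t ≤ T})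
    (hy4 : ∫ t in {t : ℝ | 0 ≤ t ∧ ENNReal.ofReal t ≤ T}, y t ≤ c4)
    (hg5 : ∫ t in {t : ℝ | 0 ≤ t ∧ ENNReal.ofReal t ≤ T}, g t ≤ c5) :
    (∀ r : ℝ, 0 < r → ENNReal.ofReal r < T →
      ∀ t : ℝ, 0 ≤ t → ENNReal.ofReal (t + r) ≤ T →
        y (t + r) ≤ (c4 * r⁻¹ + c2 * c5 + c3 * r) * Real.exp (c1 * c4)) ∧
    (T = ⊤ → Tendsto y atTop (nhds 0)) := by
  set S : Set ℝ := {t : ℝ | 0 ≤ t ∧ ENNReal.ofReal t ≤ T} with hS_def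
  have hSmeas : MeasurableSet S := by
    have : S = Ici (0:ℝ) ∩ ENNReal.ofReal ⁻¹' (Iic T) := rfl
    rw [this]
    exact measurableSet_Ici.inter (ENNReal.measurable_ofReal measurableSet_Iic)
  have hSsub : ∀ a c : ℝ, 0 ≤ a → ENNReal.ofReal c ≤ T → Icc a c ⊆ S := by
    intro a c ha hc u hu
    exact ⟨ha.trans hu.1, (ENNReal.ofReal_le_ofReal hu.2).trans hc⟩
  -- interval integrals of `y`, `g` are bounded by `c4`, `c5`
  have hbound : ∀ (f : ℝ → ℝ) (cf : ℝ), IntegrableOn f S → (∫ u in S, f u) ≤ cf →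
      (∀ u ∈ S, 0 ≤ f u) →
      ∀ a c : ℝ, 0 ≤ a → a ≤ c → ENNReal.ofReal c ≤ T → ∫ u in a..c, f u ≤ cf := by
    intro f cf hint hle hnn a c ha hac hcT
    rw [intervalIntegral.integral_of_le hac]
    refine le_trans (setIntegral_mono_set hint ?_ ?_) hle
    · exact (ae_restrict_iff' hSmeas).2 (ae_of_all _ fun u hu => hnn u hu)
    · exact HasSubset.Subset.eventuallyLE
        ((Ioc_subset_Icc_self).trans (hSsub a c ha hcT))
  have hintnn : ∀ a c : ℝ, 0 ≤ a → a ≤ c → ENNReal.ofReal c ≤ T →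
      (0:ℝ) ≤ ∫ u in a..c, y u := by
    intro a c ha hac hcT
    exact intervalIntegral.integral_nonneg hac
      (fun u hu => hynn u (ha.trans hu.1) ((ENNReal.ofReal_le_ofReal hu.2).trans hcT))
  -- key estimate
  have key : ∀ t r : ℝ, 0 ≤ t → 0 < r → ENNReal.ofReal (t + r) ≤ T →
      y (t + r) ≤ ((∫ u in t..(t+r), y u) / r + c2 * (∫ u in t..(t+r), g u) + c3 * r) *
        Real.exp (c1 * c4) := by
    intro t r ht hr htrT
    have htr : t ≤ t + r := by linarith
    have htr0 : 0 < t + r := by linarith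
    have hIccS : Icc t (t + r) ⊆ S := hSsub t (t + r) ht htrT
    have ycont' : ContinuousOn y (Icc t (t + r)) := hycont.mono hIccS
    have gcont' : ContinuousOn g (Icc t (t + r)) := hgcont.mono hIccS
    obtain ⟨s, hs, hmin⟩ := isCompact_Icc.exists_isMinOn (nonempty_Icc.2 htr) ycont'
    have hsnn : 0 ≤ s := ht.trans hs.1
    have hyii : IntervalIntegrable y MeasureTheory.volume t (t + r) := by
      apply ContinuousOn.intervalIntegrable; rwa [uIcc_of_le htr]
    have hys : y s ≤ (∫ u in t..(t+r), y u) / r := by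
      rw [le_div_iff₀ hr]
      have h1 : ∫ u in t..(t+r), y s ≤ ∫ u in t..(t+r), y u :=
        intervalIntegral.integral_mono_on htr intervalIntegrable_const hyii
          (fun u hu => hmin hu)
      rw [intervalIntegral.integral_const] at h1
      simp only [add_sub_cancel_left, smul_eq_mul] at h1
      linarith [h1]
    -- apply core lemma on [s, t+r]
    have hsub2 : Icc s (t + r) ⊆ Icc t (t + r) := Icc_subset_Icc hs.1 le_rfl
    have hcore := gronwall_core_aux y g y' c1 c2 c3 hc1 hc2 hc3 s (t + r) hs.2
      (fun u hu => hynn u (hsnn.trans hu.1)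
        ((ENNReal.ofReal_le_ofReal hu.2).trans htrT))
      (fun u hu => hgnn u (hsnn.trans hu.1)
        ((ENNReal.ofReal_le_ofReal hu.2).trans htrT))
      (ycont'.mono hsub2) (gcont'.mono hsub2)
      (fun u hu => hyderiv u (lt_of_le_of_lt hsnn hu.1)
        (lt_of_lt_of_le ((ENNReal.ofReal_lt_ofReal_iff htr0).2 hu.2) htrT))
      (fun u hu => hineq u (lt_of_le_of_lt hsnn hu.1)
        (lt_of_lt_of_le ((ENNReal.ofReal_lt_ofReal_iff htr0).2 hu.2) htrT))
    -- bound the exponent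
    have hexp1 : ∫ u in s..(t+r), y u ≤ c4 := by
      refine hbound y c4 hyint hy4 (fun u hu => hynn u hu.1 hu.2) s (t + r) hsnn hs.2 htrT
    have hexp2 : Real.exp (c1 * ∫ u in s..(t+r), y u) ≤ Real.exp (c1 * c4) :=
      Real.exp_le_exp.2 (mul_le_mul_of_nonneg_left hexp1 hc1)
    -- bound the prefactor
    have hgii : IntervalIntegrable g MeasureTheory.volume s (t + r) := by
      apply ContinuousOn.intervalIntegrable
      rw [uIcc_of_le hs.2]; exact gcont'.mono hsub2
    have hgii2 : IntervalIntegrable (fun u => c2 * g u) MeasureTheory.volume s (t + r) :=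
      hgii.const_mul c2
    have hsplit : ∫ u in s..(t+r), (c2 * g u + c3) =
        c2 * (∫ u in s..(t+r), g u) + c3 * (t + r - s) := by
      rw [intervalIntegral.integral_add hgii2 intervalIntegrable_const,
        intervalIntegral.integral_const_mul, intervalIntegral.integral_const]
      simp [mul_comm]
    have hgmono : ∫ u in s..(t+r), g u ≤ ∫ u in t..(t+r), g u := by
      rw [intervalIntegral.integral_of_le hs.2, intervalIntegral.integral_of_le htr]
      refine setIntegral_mono_set (hgint.mono_set ((Ioc_subset_Icc_self).trans hIccS)) ?_ ?_
      · refine (ae_restrict_iff' measurableSet_Ioc).2 (ae_of_all _ fun u hu => ?_)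
        exact hgnn u (ht.trans hu.1.le) ((ENNReal.ofReal_le_ofReal hu.2).trans htrT)
      · exact HasSubset.Subset.eventuallyLE (Ioc_subset_Ioc_left hs.1)
    have hpre : y s + ∫ u in s..(t+r), (c2 * g u + c3) ≤
        (∫ u in t..(t+r), y u) / r + c2 * (∫ u in t..(t+r), g u) + c3 * r := by
      rw [hsplit]
      have h1 : c3 * (t + r - s) ≤ c3 * r := by
        apply mul_le_mul_of_nonneg_left _ hc3; linarith [hs.1]
      have h2 : c2 * (∫ u in s..(t+r), g u) ≤ c2 * (∫ u in t..(t+r), g u) :=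
        mul_le_mul_of_nonneg_left hgmono hc2
      linarith
    have hprenn : 0 ≤ y s + ∫ u in s..(t+r), (c2 * g u + c3) := by
      have h1 : 0 ≤ y s := hynn s hsnn
        ((ENNReal.ofReal_le_ofReal hs.2).trans htrT)
      have h2 : (0:ℝ) ≤ ∫ u in s..(t+r), (c2 * g u + c3) := by
        apply intervalIntegral.integral_nonneg hs.2
        intro u hu
        have := hgnn u (hsnn.trans hu.1) ((ENNReal.ofReal_le_ofReal hu.2).trans htrT)
        positivity
      linarith
    calc y (t + r) ≤ (y s + ∫ u in s..(t+r), (c2 * g u + c3)) *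
          Real.exp (c1 * ∫ u in s..(t+r), y u) := hcore
      _ ≤ (y s + ∫ u in s..(t+r), (c2 * g u + c3)) * Real.exp (c1 * c4) :=
          mul_le_mul_of_nonneg_left hexp2 hprenn
      _ ≤ ((∫ u in t..(t+r), y u) / r + c2 * (∫ u in t..(t+r), g u) + c3 * r) *
          Real.exp (c1 * c4) := mul_le_mul_of_nonneg_right hpre (Real.exp_pos _).le
  constructor
  · -- part 1
    intro r hr hrT t ht htrT
    have h := key t r ht hr htrT
    refine h.trans (mul_le_mul_of_nonneg_right ?_ (Real.exp_pos _).le)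
    have htr : t ≤ t + r := by linarith
    have h1 : ∫ u in t..(t+r), y u ≤ c4 :=
      hbound y c4 hyint hy4 (fun u hu => hynn u hu.1 hu.2) t (t + r) ht htr htrT
    have h2 : ∫ u in t..(t+r), g u ≤ c5 :=
      hbound g c5 hgint hg5 (fun u hu => hgnn u hu.1 hu.2) t (t + r) ht htr htrT
    have h3 : (∫ u in t..(t+r), y u) / r ≤ c4 * r⁻¹ := by
      rw [← div_eq_mul_inv]
      gcongr
    have h4 : c2 * (∫ u in t..(t+r), g u) ≤ c2 * c5 := mul_le_mul_of_nonneg_left h2 hc2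
    linarith
  · -- part 2
    intro hTtop
    subst hTtop
    have hSeq : S = Ici (0:ℝ) := by
      ext u; simp [hS_def]
    rw [hSeq] at hyint hgint
    have hyIoi : IntegrableOn y (Ioi (0:ℝ)) := hyint.mono_set Ioi_subset_Ici_self
    have hgIoi : IntegrableOn g (Ioi (0:ℝ)) := hgint.mono_set Ioi_subset_Ici_self
    have hyten : Tendsto (fun t : ℝ => ∫ x in (0:ℝ)..t, y x) atTop
        (nhds (∫ x in Ioi (0:ℝ), y x)) :=
      intervalIntegral_tendsto_integral_Ioi 0 hyIoi tendsto_id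
    have hgten : Tendsto (fun t : ℝ => ∫ x in (0:ℝ)..t, g x) atTop
        (nhds (∫ x in Ioi (0:ℝ), g x)) :=
      intervalIntegral_tendsto_integral_Ioi 0 hgIoi tendsto_id
    have hii : ∀ (f : ℝ → ℝ), IntegrableOn f (Ici (0:ℝ)) → ∀ c : ℝ, 0 ≤ c →
        IntervalIntegrable f MeasureTheory.volume 0 c := by
      intro f hf c hc
      rw [intervalIntegrable_iff_integrableOn_Ioc_of_le hc]
      exact hf.mono_set (fun u hu => hu.1.le)
    have htail : ∀ (f : ℝ → ℝ), IntegrableOn f (Ici (0:ℝ)) → ∀ r : ℝ, 0 < r →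
        Tendsto (fun t : ℝ => ∫ u in t..(t+r), f u) atTop (nhds 0) := by
      intro f hf r hr
      have h1 : Tendsto (fun t : ℝ => ∫ x in (0:ℝ)..(t+r), f x) atTop
          (nhds (∫ x in Ioi (0:ℝ), f x)) :=
        (intervalIntegral_tendsto_integral_Ioi 0 (hf.mono_set Ioi_subset_Ici_self)
          (tendsto_atTop_add_const_right atTop r tendsto_id))
      have h2 : Tendsto (fun t : ℝ => ∫ x in (0:ℝ)..t, f x) atTop
          (nhds (∫ x in Ioi (0:ℝ), f x)) :=
        intervalIntegral_tendsto_integral_Ioi 0 (hf.mono_set Ioi_subset_Ici_self) tendsto_id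
      have h3 := h1.sub h2
      rw [sub_self] at h3
      refine h3.congr' ?_
      filter_upwards [eventually_ge_atTop (0:ℝ)] with t ht
      rw [intervalIntegral.integral_interval_sub_left (hii f hf (t+r) (by linarith))
        (hii f hf t ht)]
    set E := Real.exp (c1 * c4) with hE_def
    have hE : 0 < E := Real.exp_pos _
    rw [NormedAddCommGroup.tendsto_nhds_zero]
    intro ε hε
    set r : ℝ := ε / (2 * E * (c3 + 1)) with hr_def
    have hrpos : 0 < r := by positivity
    have hD : (0:ℝ) < 2 * E * (c3 + 1) := by nlinarith
    have hlim : c3 * r * E < ε := by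
      rw [hr_def]
      rw [show c3 * (ε / (2 * E * (c3 + 1))) * E = c3 * ε * E / (2 * E * (c3 + 1)) by ring]
      rw [div_lt_iff₀ hD]
      nlinarith [mul_pos hε hE]
    -- RHS function
    have hRHS0 : Tendsto (fun u : ℝ =>
        ((∫ x in (u-r)..(u-r+r), y x) / r + c2 * (∫ x in (u-r)..(u-r+r), g x) + c3 * r) * E)
        atTop (nhds (c3 * r * E)) := by
      have hshift : Tendsto (fun u : ℝ => u - r) atTop atTop :=
        tendsto_atTop_add_const_right atTop (-r) tendsto_id
      have t1 := (htail y hyint r hrpos).comp hshift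
      have t2 := (htail g hgint r hrpos).comp hshift
      have := (((t1.div_const r).add (t2.const_mul c2)).add
        (tendsto_const_nhds : Tendsto (fun _ : ℝ => c3 * r) atTop (nhds (c3 * r)))).mul_const E
      simpa using this
    have hRHS : Tendsto (fun u : ℝ =>
        ((∫ x in (u-r)..u, y x) / r + c2 * (∫ x in (u-r)..u, g x) + c3 * r) * E)
        atTop (nhds (c3 * r * E)) := by
      refine hRHS0.congr (fun u => ?_)
      rw [show u - r + r = u from by ring]
    have hev1 := hRHS.eventually_lt_const hlim
    filter_upwards [hev1, eventually_ge_atTop r] with u h1 h2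
    have ht : (0:ℝ) ≤ u - r := by linarith
    have hu0 : (0:ℝ) ≤ u := by linarith
    have hk := key (u - r) r ht hrpos le_top
    rw [show u - r + r = u from by ring] at hk
    have hyu : 0 ≤ y u := hynn u hu0 le_top
    rw [Real.norm_eq_abs, abs_of_nonneg hyu]
    exact lt_of_le_of_lt hk h1
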